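/- Let L be a nonempty level datum whose largest level k satisfies k > 2, let ρ := Ram(L) and s := k·ρ ∈ ℤ, and suppose B_L = 2n for some integer n ≥ 0. Then s − ρ < 6n. -/

import Mathlib

open Finset

/-- The ramification order of a level datum: the least common denominator of its
elements, i.e. the lcm of the denominators (`ram ∅ = 1`). -/
def ram (L : Finset ℚ) : ℕ := L.lcm Rat.den

/-- The least common denominator `d` of the "initial segment" of `L` consisting of the
elements `≥ k` (the elements come in decreasing order `k₀ > k₁ > ⋯`). -/
def segLcm (L : Finset ℚ) (k : ℚ) : ℕ := (L.filter (fun x => k ≤ x)).lcm Rat.den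

/-- A level datum: a finite set of positive rationals such that the least common
denominators `d₀, d₁, …` of the initial segments (for the decreasing order) are all `≥ 2`
and form a strictly increasing sequence.  (Since the `d_j` are increasing, requiring
`d_j ≥ 2` for all `j` is equivalent to `d₀ ≥ 2`, i.e. to the largest element not being
an integer.) -/
def IsLevelDatum (L : Finset ℚ) : Prop :=
  (∀ k ∈ L, 0 < k) ∧
  (∀ k ∈ L, 2 ≤ segLcm L k) ∧
  (∀ k ∈ L, ∀ k' ∈ L, k' < k → segLcm L k < segLcm L k')

/-- The largest level of `L` (junk value `0` for `L = ∅`). -/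
def maxLevel (L : Finset ℚ) : ℚ := WithBot.unbotD 0 L.max

/-- The numerator `s(k) := k · Ram(L) ∈ ℤ` of a level `k` of `L`. -/
def numer (L : Finset ℚ) (k : ℚ) : ℤ := (k * (ram L : ℚ)).num

/-- `σ := k₀ · Ram(L) ∈ ℤ`, the numerator of the largest level. -/
def sigma0 (L : Finset ℚ) : ℤ := numer L (maxLevel L)

/-- `gcd(s(x) for x ∈ s, Ram L)` : the gcd of `Ram L` together with the numerators of the
elements of a subset `s ⊆ L`. -/
def gSeg (L : Finset ℚ) (s : Finset ℚ) : ℕ :=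
  Nat.gcd (ram L) (s.gcd (fun x => (numer L x).natAbs))

/-- The quantity
`B_L = (r − (s₀,r))·s₀ + Σᵢ ((s₀,…,s_{i−1},r) − (s₀,…,s_i,r))·s_i − r² + 1`
(`B_∅ = 0`), equal to the dimension of the elementary wild character variety. -/
def B (L : Finset ℚ) : ℤ :=
  (∑ k ∈ L, ((gSeg L (L.filter (fun x => k < x)) : ℤ)
      - (gSeg L (L.filter (fun x => k ≤ x)) : ℤ)) * numer L k)
    - (ram L : ℤ) ^ 2 + 1

/-- A level datum is locally minimal at infinity if it is empty, or its largest level is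
`< 1` or `> 2`. -/
def LocallyMinimal (L : Finset ℚ) : Prop :=
  L = ∅ ∨ maxLevel L < 1 ∨ 2 < maxLevel L

/-- Rescaling of a level datum by a factor `c`, removing the integer elements. -/
def rescale (L : Finset ℚ) (c : ℚ) : Finset ℚ :=
  (L.image (fun k => c * k)).filter (fun x => x.den ≠ 1)

/-- The local simplification map `S_∞` on level data: if the largest level `k₀` satisfies
`1 < k₀ < 2`, rescale all the levels by `ρ/(σ−ρ)` (where `ρ = Ram L`, `σ = k₀·ρ`) and
remove the integer levels; otherwise do nothing. -/
def Sinf (L : Finset ℚ) : Finset ℚ :=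
  if 1 < maxLevel L ∧ maxLevel L < 2 then
    rescale L ((ram L : ℚ) / ((sigma0 L : ℚ) - (ram L : ℚ)))
  else L

/-! Only the summand of `B L` at the largest level `k₀` matters. All summands are
nonnegative, because the gcds of the initial segments decrease along the chain and the
numerators are positive, so with `ρ = Ram L`, `σ = k₀ ρ` and `g = gcd(ρ, σ)` we get
`B L ≥ (ρ - g) σ - ρ² + 1`. As `k₀` is not an integer, `g` is a proper divisor of `ρ`, so
`2g ≤ ρ`; as `k₀ > 2` and `g` divides `σ - 2ρ > 0`, we get `σ ≥ 2ρ + g`. Under these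
constraints `σ - ρ < 3((ρ - g) σ - ρ² + 1)`. -/

lemma Nat.two_mul_le_of_dvd_of_ne {a b : ℕ} (hab : a ∣ b) (hb : 0 < b) (hne : a ≠ b) :
    2 * a ≤ b := by
  obtain ⟨d, rfl⟩ := hab
  have hd0 : d ≠ 0 := by rintro rfl; simp at hb
  have hd1 : d ≠ 1 := by rintro rfl; simp at hne
  nlinarith [show 2 ≤ d by omega]

lemma Rat.num_mul_natCast_eq {q : ℚ} {m : ℕ} (h : q.den ∣ m) :
    ((q * m).num : ℚ) = q * m := by
  obtain ⟨c, rfl⟩ := h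
  have hint : q * ((q.den * c : ℕ) : ℚ) = ((q.num * c : ℤ) : ℚ) := by
    push_cast
    rw [← mul_assoc, Rat.mul_den_eq_num]
  rw [hint, Rat.num_intCast]

/- Writing `ρ = 2g + u` and `σ = 2ρ + g + t`, the difference of the two sides is
`3g² + 9gu + 3u² - 3g - u + 3 + (3ρ - 3g - 1) t`. -/
lemma sub_lt_three_mul_of_le {ρ σ g : ℤ} (hg : 0 < g) (hgρ : 2 * g ≤ ρ) (hσ : 2 * ρ + g ≤ σ) :
    σ - ρ < 3 * ((ρ - g) * σ - ρ ^ 2 + 1) := by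
  nlinarith [mul_nonneg (sub_nonneg.2 hσ) (show (0 : ℤ) ≤ 3 * ρ - 3 * g - 1 by linarith),
    mul_nonneg (sub_nonneg.2 hgρ) (show (0 : ℤ) ≤ 9 * g - 1 by linarith),
    sq_nonneg (ρ - 2 * g), mul_pos hg hg]

section LevelDatum

variable {L : Finset ℚ} {k : ℚ}

lemma ram_pos (L : Finset ℚ) : 0 < ram L :=
  Nat.pos_of_ne_zero <| by simp [ram, Finset.lcm_eq_zero_iff, Rat.den_ne_zero]

lemma den_dvd_ram (hk : k ∈ L) : k.den ∣ ram L := Finset.dvd_lcm hk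

lemma numer_cast (hk : k ∈ L) : (numer L k : ℚ) = k * ram L :=
  Rat.num_mul_natCast_eq (den_dvd_ram hk)

lemma numer_pos (hk : 0 < k) : 0 < numer L k :=
  Rat.num_pos.2 (mul_pos hk (by exact_mod_cast ram_pos L))

lemma gSeg_dvd_gSeg {s t : Finset ℚ} (hst : s ⊆ t) : gSeg L t ∣ gSeg L s :=
  Nat.dvd_gcd (Nat.gcd_dvd_left _ _) <|
    (Nat.gcd_dvd_right _ _).trans (Finset.gcd_mono hst)

lemma gSeg_pos (s : Finset ℚ) : 0 < gSeg L s := Nat.gcd_pos_of_pos_left _ (ram_pos L)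

@[simp] lemma gSeg_empty : gSeg L ∅ = ram L := by simp [gSeg]

@[simp] lemma gSeg_singleton : gSeg L {k} = Int.gcd (ram L) (numer L k) := by
  simp [gSeg]; rfl

lemma B_summand_nonneg (hk : 0 < k) :
    0 ≤ ((gSeg L (L.filter (fun x => k < x)) : ℤ)
      - (gSeg L (L.filter (fun x => k ≤ x)) : ℤ)) * numer L k := by
  refine mul_nonneg (sub_nonneg.2 ?_) (numer_pos hk).le
  exact_mod_cast Nat.le_of_dvd (gSeg_pos _)
    (gSeg_dvd_gSeg (Finset.monotone_filter_right L fun _ _ h => le_of_lt h))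

lemma maxLevel_eq_max' (hne : L.Nonempty) : maxLevel L = L.max' hne := by
  simp [maxLevel, ← Finset.coe_max' hne]

lemma maxLevel_mem (hne : L.Nonempty) : maxLevel L ∈ L :=
  maxLevel_eq_max' hne ▸ L.max'_mem hne

lemma filter_maxLevel_lt (hne : L.Nonempty) : L.filter (fun x => maxLevel L < x) = ∅ := by
  rw [maxLevel_eq_max' hne, Finset.filter_eq_empty_iff]
  exact fun x hx => not_lt.2 (L.le_max' x hx)

lemma filter_maxLevel_le (hne : L.Nonempty) :
    L.filter (fun x => maxLevel L ≤ x) = {maxLevel L} := by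
  ext x
  simp only [maxLevel_eq_max' hne, Finset.mem_filter, Finset.mem_singleton]
  exact ⟨fun h => le_antisymm (L.le_max' x h.1) h.2, by rintro rfl; exact ⟨L.max'_mem hne, le_rfl⟩⟩

lemma sigma0_cast (hne : L.Nonempty) : (sigma0 L : ℚ) = maxLevel L * ram L :=
  numer_cast (maxLevel_mem hne)

lemma leading_term_le_B (hpos : ∀ k ∈ L, 0 < k) (hne : L.Nonempty) :
    ((ram L : ℤ) - Int.gcd (ram L) (sigma0 L)) * sigma0 L - (ram L : ℤ) ^ 2 + 1 ≤ B L := by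
  have hlead := Finset.single_le_sum (fun k hk => B_summand_nonneg (L := L) (hpos k hk))
    (maxLevel_mem hne)
  rw [filter_maxLevel_lt hne, filter_maxLevel_le hne, gSeg_empty, gSeg_singleton] at hlead
  rw [B]
  exact Int.add_le_add_right (Int.sub_le_sub_right hlead _) _

lemma two_mul_ram_lt_sigma0 (hne : L.Nonempty) (hmax : 2 < maxLevel L) :
    2 * (ram L : ℤ) < sigma0 L := by
  have : 2 * (ram L : ℚ) < maxLevel L * ram L :=
    mul_lt_mul_of_pos_right hmax (by exact_mod_cast ram_pos L)
  rw [← sigma0_cast hne] at this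
  exact_mod_cast this

lemma two_mul_ram_add_gcd_le_sigma0 (hne : L.Nonempty) (hmax : 2 < maxLevel L) :
    2 * (ram L : ℤ) + Int.gcd (ram L) (sigma0 L) ≤ sigma0 L := by
  have hdvd : (Int.gcd (ram L) (sigma0 L) : ℤ) ∣ sigma0 L - 2 * ram L :=
    dvd_sub (Int.gcd_dvd_right _ _) (dvd_mul_of_dvd_right (Int.gcd_dvd_left _ _) _)
  have := Int.le_of_dvd (by linarith [two_mul_ram_lt_sigma0 hne hmax]) hdvd
  linarith

lemma two_le_den_maxLevel (hL : IsLevelDatum L) (hne : L.Nonempty) :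
    2 ≤ (maxLevel L).den := by
  simpa [segLcm, filter_maxLevel_le hne] using hL.2.1 _ (maxLevel_mem hne)

lemma not_ram_dvd_sigma0 (hL : IsLevelDatum L) (hne : L.Nonempty) :
    ¬ (ram L : ℤ) ∣ sigma0 L := by
  rintro ⟨t, ht⟩
  have hρ : (ram L : ℚ) ≠ 0 := by exact_mod_cast (ram_pos L).ne'
  have hint : maxLevel L = t := by
    apply mul_right_cancel₀ hρ
    rw [← sigma0_cast hne, ht]
    push_cast
    ring
  have := two_le_den_maxLevel hL hne
  rw [hint, Rat.den_intCast] at this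
  omega

lemma two_mul_gcd_le_ram (hL : IsLevelDatum L) (hne : L.Nonempty) :
    2 * Int.gcd (ram L) (sigma0 L) ≤ ram L := by
  refine Nat.two_mul_le_of_dvd_of_ne (Int.natCast_dvd_natCast.1 (Int.gcd_dvd_left _ _))
    (ram_pos L) fun h => not_ram_dvd_sigma0 hL hne ?_
  exact h ▸ Int.gcd_dvd_right _ _

end LevelDatum

/-- if `L` is a nonempty level datum with largest level `k > 2`,
`ρ = Ram(L)`, `s = k·ρ`, and `B_L = 2n` with `n ≥ 0`, then `s − ρ < 6n`. -/
theorem stmt_2 (L : Finset ℚ) (hL : IsLevelDatum L) (hne : L.Nonempty)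
    (hmax : 2 < maxLevel L) (n : ℕ) (hB : B L = 2 * (n : ℤ)) :
    sigma0 L - (ram L : ℤ) < 6 * (n : ℤ) := by
  have hg : 0 < (Int.gcd (ram L) (sigma0 L) : ℤ) :=
    Int.natCast_pos.2 (Int.gcd_pos_of_ne_zero_left _ (by exact_mod_cast (ram_pos L).ne'))
  have key := sub_lt_three_mul_of_le hg (by exact_mod_cast two_mul_gcd_le_ram hL hne)
    (two_mul_ram_add_gcd_le_sigma0 hne hmax)
  linarith [leading_term_le_B hL.1 hne]
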